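/- arXiv:2511.22636 — 4 statements merged into one kernel-verified Lean document; each statement's English description precedes it below -/
import Mathlib

section
/- Let μ and ν be probability measures on ℝ^d that are absolutely continuous with densities f, g ∈ L¹(ℝ^d), and suppose both have finite p-th moments M_p(μ), M_p(ν) for some p > 1. Then for every 1 ≤ q < p there exists a constant C depending only on p and q such that W_q(μ,ν) ≤ C · (M_p(μ) + M_p(ν))^{1/p} · ‖f − g‖_{L¹}^{1/q − 1/p}. -/
open MeasureTheory
open scoped ENNReal

/-- The `q`-Wasserstein distance, defined as the infimum over couplings `γ` of `μ` and `ν`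
of `(∫ |x - y|^q dγ)^(1/q)`. -/
noncomputable def wassersteinDist {d : ℕ} (q : ℝ)
    (μ ν : Measure (EuclideanSpace ℝ (Fin d))) : ℝ :=
  sInf { r : ℝ | ∃ γ : Measure (EuclideanSpace ℝ (Fin d) × EuclideanSpace ℝ (Fin d)),
    γ.fst = μ ∧ γ.snd = ν ∧ r = (∫ p, ‖p.1 - p.2‖ ^ q ∂γ) ^ (1 / q) }

/-!
Write `μ = α + μ'` and `ν = α + ν'`, where `α` has density `min f g`, so that the excess parts
`μ'` and `ν'` have the same mass `δ ≤ ‖f - g‖₁`. Leaving `α` on the diagonal and coupling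
`μ'` with `ν'` independently (normalised by `δ`) gives a coupling of `μ` and `ν` whose cost is
at most `2^(q-1)` times the sum of the `q`-th moments of `μ'` and `ν'`. By Hölder's inequality
on a measure of mass `δ`, each of these is at most `M_p^(q/p) δ^(1 - q/p)`, hence
`W_q ≤ 2 (M_p(μ) + M_p(ν))^(1/p) δ^(1/q - 1/p)`.
-/

open Set

theorem ofReal_sub_ofReal_le_ofReal_abs_sub (a b : ℝ) :
    ENNReal.ofReal a - ENNReal.ofReal b ≤ ENNReal.ofReal |a - b| := by
  rw [tsub_le_iff_right]
  calc ENNReal.ofReal a ≤ ENNReal.ofReal (|a - b| + b) := by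
        gcongr; linarith [le_abs_self (a - b)]
    _ ≤ _ := ENNReal.ofReal_add_le

section

variable {X : Type*} [MeasurableSpace X]

theorem exists_coupling_lintegral_le {α μ' ν' : Measure X} [IsFiniteMeasure μ']
    [IsFiniteMeasure ν'] (hmass : μ' univ = ν' univ) {c : X × X → ℝ≥0∞} {a b : X → ℝ≥0∞}
    (ha : Measurable a) (hb : Measurable b) (hc_diag : ∀ x, c (x, x) = 0)
    (hc : ∀ x y, c (x, y) ≤ a x + b y) :
    ∃ γ : Measure (X × X), γ.fst = α + μ' ∧ γ.snd = α + ν' ∧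
      ∫⁻ z, c z ∂γ ≤ ∫⁻ x, a x ∂μ' + ∫⁻ y, b y ∂ν' := by
  set δ := μ' univ
  have hrescale : ∀ ρ : Measure X, ρ univ = δ → (δ⁻¹ * δ) • ρ = ρ := by
    intro ρ hρ
    rcases eq_or_ne δ 0 with h0 | h0
    · rw [Measure.measure_univ_eq_zero.mp (hρ.trans h0), smul_zero]
    · rw [ENNReal.inv_mul_cancel h0 (measure_ne_top _ _), one_smul]
  refine ⟨α.map (fun x => (x, x)) + δ⁻¹ • μ'.prod ν', ?_, ?_, ?_⟩
  · rw [Measure.fst_add, Measure.fst_map_prodMk (X := fun x => x) measurable_id',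
      Measure.map_id', Measure.fst, Measure.map_smul, Measure.map_fst_prod, smul_smul, ← hmass,
      hrescale μ' rfl]
  · rw [Measure.snd_add, Measure.snd_map_prodMk (Y := fun x => x) measurable_id',
      Measure.map_id', Measure.snd, Measure.map_smul, Measure.map_snd_prod, smul_smul,
      hrescale ν' hmass.symm]
  · have hdiag : ∫⁻ z, c z ∂(α.map fun x => (x, x)) = 0 :=
      le_antisymm ((lintegral_map_le _ _).trans (by simp [hc_diag])) bot_le
    have hprod : ∫⁻ z, c z ∂(μ'.prod ν') ≤ δ * (∫⁻ x, a x ∂μ' + ∫⁻ y, b y ∂ν') :=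
      calc ∫⁻ z, c z ∂(μ'.prod ν')
          ≤ ∫⁻ z, a z.1 + b z.2 ∂(μ'.prod ν') := lintegral_mono fun z => hc z.1 z.2
        _ = ∫⁻ x, a x ∂(μ'.prod ν').map Prod.fst + ∫⁻ y, b y ∂(μ'.prod ν').map Prod.snd := by
          rw [lintegral_add_left (f := fun z : X × X => a z.1) (ha.comp measurable_fst),
            lintegral_map ha measurable_fst, lintegral_map hb measurable_snd]
        _ = δ * (∫⁻ x, a x ∂μ' + ∫⁻ y, b y ∂ν') := by
          rw [Measure.map_fst_prod, Measure.map_snd_prod, lintegral_smul_measure,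
            lintegral_smul_measure, ← hmass, smul_eq_mul, smul_eq_mul, mul_add]
    rw [lintegral_add_measure, lintegral_smul_measure, hdiag, zero_add, smul_eq_mul]
    calc δ⁻¹ * ∫⁻ z, c z ∂(μ'.prod ν') ≤ δ⁻¹ * δ * (∫⁻ x, a x ∂μ' + ∫⁻ y, b y ∂ν') := by
          rw [mul_assoc]; gcongr
      _ ≤ _ := mul_le_of_le_one_left' (ENNReal.inv_mul_le_one δ)

theorem withDensity_eq_withDensity_inf_add_withDensity_tsub {ρ : Measure X} {F G : X → ℝ≥0∞}
    (hF : AEMeasurable F ρ) (hG : AEMeasurable G ρ) :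
    ρ.withDensity F = ρ.withDensity (F ⊓ G) + ρ.withDensity (F - G) := by
  have hFG := hF.inf hG
  rw [withDensity_congr_ae hFG.ae_eq_mk, ← withDensity_add_left hFG.measurable_mk]
  refine withDensity_congr_ae ?_
  filter_upwards [hFG.ae_eq_mk] with x hx
  rw [Pi.add_apply, ← hx, add_comm]
  exact tsub_add_min.symm

theorem withDensity_ofReal_tsub_univ_le {ρ : Measure X} {f g : X → ℝ}
    (hfg : Integrable (fun x => f x - g x) ρ) :
    ρ.withDensity (fun x => ENNReal.ofReal (f x) - ENNReal.ofReal (g x)) univ ≤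
      ENNReal.ofReal (∫ x, |f x - g x| ∂ρ) := by
  rw [withDensity_apply _ MeasurableSet.univ, Measure.restrict_univ,
    ofReal_integral_eq_lintegral_ofReal hfg.abs (ae_of_all _ fun x => abs_nonneg _)]
  exact lintegral_mono fun x => ofReal_sub_ofReal_le_ofReal_abs_sub (f x) (g x)

theorem lintegral_rpow_le_lintegral_rpow_mul_measure_univ_rpow {ρ : Measure X}
    {g : X → ℝ≥0∞} (hg : AEMeasurable g ρ) {p q : ℝ} (hq : 0 < q) (hqp : q ≤ p) :
    ∫⁻ x, g x ^ q ∂ρ ≤ (∫⁻ x, g x ^ p ∂ρ) ^ (q / p) * ρ univ ^ (1 - q / p) := by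
  have h := ENNReal.rpow_le_rpow
    (eLpNorm'_le_eLpNorm'_mul_rpow_measure_univ hq hqp hg.aestronglyMeasurable) hq.le
  rwa [eLpNorm'_eq_lintegral_enorm, eLpNorm'_eq_lintegral_enorm, ← ENNReal.rpow_mul,
    one_div_mul_cancel hq.ne', ENNReal.rpow_one, ENNReal.mul_rpow_of_nonneg _ _ hq.le,
    ← ENNReal.rpow_mul, ← ENNReal.rpow_mul, one_div_mul_eq_div, sub_mul,
    one_div_mul_cancel hq.ne', one_div_mul_eq_div] at h

theorem integral_norm_rpow_eq_toReal_lintegral {E : Type*} [NormedAddCommGroup E] {ρ : Measure X}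
    {f : X → E} (hf : AEStronglyMeasurable f ρ) {q : ℝ} (hq : 0 ≤ q) :
    ∫ x, ‖f x‖ ^ q ∂ρ = (∫⁻ x, ‖f x‖ₑ ^ q ∂ρ).toReal := by
  rw [integral_eq_lintegral_of_nonneg_ae (ae_of_all _ fun x => by positivity)
    (hf.norm.aemeasurable.pow_const q).aestronglyMeasurable]
  simp_rw [← ENNReal.ofReal_rpow_of_nonneg (norm_nonneg _) hq, ofReal_norm]

theorem MeasureTheory.Integrable.lintegral_enorm_rpow_ne_top {E : Type*} [NormedAddCommGroup E]
    {ρ : Measure X} {f : X → E} {q : ℝ} (hq : 0 ≤ q) (h : Integrable (fun x => ‖f x‖ ^ q) ρ) :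
    ∫⁻ x, ‖f x‖ₑ ^ q ∂ρ ≠ ∞ := by
  simpa [Real.enorm_rpow_of_nonneg (norm_nonneg _) hq] using h.2.ne

end

theorem enorm_sub_rpow_le {E : Type*} [SeminormedAddGroup E] (x y : E) {q : ℝ} (hq : 1 ≤ q) :
    ‖x - y‖ₑ ^ q ≤ 2 ^ (q - 1) * ‖x‖ₑ ^ q + 2 ^ (q - 1) * ‖y‖ₑ ^ q := by
  rw [← mul_add]
  exact (ENNReal.rpow_le_rpow enorm_sub_le (by linarith)).trans
    (ENNReal.rpow_add_le_mul_rpow_add_rpow _ _ hq)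

theorem exists_coupling_lintegral_enorm_sub_rpow_le {E : Type*} [NormedAddCommGroup E]
    [MeasurableSpace E] [BorelSpace E] {μ ν α μ' ν' : Measure E} [IsFiniteMeasure μ]
    [IsFiniteMeasure ν] (hμ : μ = α + μ') (hν : ν = α + ν') (hμν : μ univ = ν univ) {p q : ℝ}
    (hq : 1 ≤ q) (hqp : q ≤ p) :
    ∃ γ : Measure (E × E), γ.fst = μ ∧ γ.snd = ν ∧
      (∫⁻ z, ‖z.1 - z.2‖ₑ ^ q ∂γ) ^ (1 / q) ≤
        2 * (∫⁻ x, ‖x‖ₑ ^ p ∂μ + ∫⁻ x, ‖x‖ₑ ^ p ∂ν) ^ (1 / p) * μ' univ ^ (1 / q - 1 / p) := by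
  have hq0 : 0 < q := zero_lt_one.trans_le hq
  have hp0 : 0 < p := hq0.trans_le hqp
  have hμ'le : μ' ≤ μ := hμ ▸ Measure.le_add_left le_rfl
  have hν'le : ν' ≤ ν := hν ▸ Measure.le_add_left le_rfl
  have : IsFiniteMeasure α := isFiniteMeasure_of_le μ (hμ ▸ Measure.le_add_right le_rfl)
  have : IsFiniteMeasure μ' := isFiniteMeasure_of_le μ hμ'le
  have : IsFiniteMeasure ν' := isFiniteMeasure_of_le ν hν'le
  have hmass : μ' univ = ν' univ := by
    rw [hμ, hν, Measure.add_apply, Measure.add_apply] at hμν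
    exact (ENNReal.add_right_inj (measure_ne_top α univ)).mp hμν
  set S := ∫⁻ x, ‖x‖ₑ ^ p ∂μ + ∫⁻ x, ‖x‖ₑ ^ p ∂ν
  set δ := μ' univ
  have hmoment : ∀ ρ' ρ : Measure E, ρ' ≤ ρ → ρ' univ = δ → ∫⁻ x, ‖x‖ₑ ^ p ∂ρ ≤ S →
      ∫⁻ x, ‖x‖ₑ ^ q ∂ρ' ≤ S ^ (q / p) * δ ^ (1 - q / p) := by
    intro ρ' ρ hle hρ' hρ
    refine (lintegral_rpow_le_lintegral_rpow_mul_measure_univ_rpow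
      measurable_enorm.aemeasurable hq0 hqp).trans ?_
    rw [hρ']
    gcongr
    exact (lintegral_mono' hle le_rfl).trans hρ
  have hnorm : Measurable fun x : E => 2 ^ (q - 1) * ‖x‖ₑ ^ q :=
    (measurable_enorm.pow_const q).const_mul _
  obtain ⟨γ, hγ₁, hγ₂, hcost⟩ := exists_coupling_lintegral_le (α := α) hmass hnorm hnorm
    (c := fun z : E × E => ‖z.1 - z.2‖ₑ ^ q)
    (fun x => by simp [ENNReal.zero_rpow_of_pos hq0]) (fun x y => enorm_sub_rpow_le x y hq)
  refine ⟨γ, hμ ▸ hγ₁, hν ▸ hγ₂, ?_⟩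
  have hcost_le : ∫⁻ z, ‖z.1 - z.2‖ₑ ^ q ∂γ ≤ (2 * S ^ (1 / p) * δ ^ (1 / q - 1 / p)) ^ q :=
    calc ∫⁻ z, ‖z.1 - z.2‖ₑ ^ q ∂γ
        ≤ 2 ^ (q - 1) * (∫⁻ x, ‖x‖ₑ ^ q ∂μ' + ∫⁻ x, ‖x‖ₑ ^ q ∂ν') := by
          rwa [mul_add, ← lintegral_const_mul _ (measurable_enorm.pow_const q),
            ← lintegral_const_mul _ (measurable_enorm.pow_const q)]
      _ ≤ 2 ^ (q - 1) * (S ^ (q / p) * δ ^ (1 - q / p) + S ^ (q / p) * δ ^ (1 - q / p)) := by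
          gcongr
          · exact hmoment μ' μ hμ'le rfl le_self_add
          · exact hmoment ν' ν hν'le hmass.symm le_add_self
      _ = (2 * S ^ (1 / p) * δ ^ (1 / q - 1 / p)) ^ q := by
          have htwo : (2 : ℝ≥0∞) ^ (q - 1) * 2 = 2 ^ q := by
            conv_rhs => rw [← sub_add_cancel q 1,
              ENNReal.rpow_add _ _ two_ne_zero ENNReal.ofNat_ne_top, ENNReal.rpow_one]
          rw [ENNReal.mul_rpow_of_nonneg _ _ hq0.le, ENNReal.mul_rpow_of_nonneg _ _ hq0.le,
            ← ENNReal.rpow_mul, ← ENNReal.rpow_mul, one_div_mul_eq_div, sub_mul,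
            one_div_mul_cancel hq0.ne', one_div_mul_eq_div, ← htwo, ← two_mul]
          ring
  calc (∫⁻ z, ‖z.1 - z.2‖ₑ ^ q ∂γ) ^ (1 / q)
      ≤ ((2 * S ^ (1 / p) * δ ^ (1 / q - 1 / p)) ^ q) ^ (1 / q) := by gcongr
    _ = 2 * S ^ (1 / p) * δ ^ (1 / q - 1 / p) := by
      rw [← ENNReal.rpow_mul, mul_one_div_cancel hq0.ne', ENNReal.rpow_one]

theorem wassersteinDist_le_of_fst_snd {d : ℕ} {q : ℝ} (hq : 0 ≤ q)
    {μ ν : Measure (EuclideanSpace ℝ (Fin d))}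
    {γ : Measure (EuclideanSpace ℝ (Fin d) × EuclideanSpace ℝ (Fin d))}
    (hγ₁ : γ.fst = μ) (hγ₂ : γ.snd = ν) :
    wassersteinDist q μ ν ≤ ((∫⁻ z, ‖z.1 - z.2‖ₑ ^ q ∂γ) ^ (1 / q)).toReal := by
  refine csInf_le ⟨0, ?_⟩ ⟨γ, hγ₁, hγ₂, ?_⟩
  · rintro r ⟨γ, -, -, rfl⟩
    positivity
  · rw [integral_norm_rpow_eq_toReal_lintegral
      (f := fun z : EuclideanSpace ℝ (Fin d) × EuclideanSpace ℝ (Fin d) => z.1 - z.2)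
      (continuous_fst.sub continuous_snd).aestronglyMeasurable hq, ENNReal.toReal_rpow]

theorem wassersteinDist_le_of_eq_add {d : ℕ} {μ ν α μ' ν' : Measure (EuclideanSpace ℝ (Fin d))}
    [IsProbabilityMeasure μ] [IsProbabilityMeasure ν] (hμ : μ = α + μ') (hν : ν = α + ν')
    {p q : ℝ} (hq : 1 ≤ q) (hqp : q ≤ p) (hMμ : Integrable (fun x => ‖x‖ ^ p) μ)
    (hMν : Integrable (fun x => ‖x‖ ^ p) ν) :
    wassersteinDist q μ ν ≤
      2 * ((∫ x, ‖x‖ ^ p ∂μ) + ∫ x, ‖x‖ ^ p ∂ν) ^ (1 / p) * (μ' univ).toReal ^ (1 / q - 1 / p) := by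
  have hq0 : 0 < q := zero_lt_one.trans_le hq
  have hp0 : 0 < p := hq0.trans_le hqp
  have hμ'_ne_top : μ' univ ≠ ∞ :=
    ne_top_of_le_ne_top (measure_ne_top μ univ) ((hμ ▸ Measure.le_add_left le_rfl) univ)
  have hMμ' := hMμ.lintegral_enorm_rpow_ne_top (f := fun x => x) hp0.le
  have hMν' := hMν.lintegral_enorm_rpow_ne_top (f := fun x => x) hp0.le
  obtain ⟨γ, hγ₁, hγ₂, hcost⟩ := exists_coupling_lintegral_enorm_sub_rpow_le hμ hν
    (by simp only [measure_univ]) hq hqp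
  calc wassersteinDist q μ ν
      ≤ ((∫⁻ z, ‖z.1 - z.2‖ₑ ^ q ∂γ) ^ (1 / q)).toReal :=
        wassersteinDist_le_of_fst_snd hq0.le hγ₁ hγ₂
    _ ≤ _ := by
        have hθ : 0 ≤ 1 / q - 1 / p := sub_nonneg.mpr (one_div_le_one_div_of_le hq0 hqp)
        refine (ENNReal.toReal_mono (ENNReal.mul_ne_top (ENNReal.mul_ne_top ENNReal.ofNat_ne_top
          (ENNReal.rpow_ne_top_of_nonneg (by positivity) (ENNReal.add_ne_top.mpr ⟨hMμ', hMν'⟩)))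
          (ENNReal.rpow_ne_top_of_nonneg hθ hμ'_ne_top)) hcost).trans_eq ?_
        rw [ENNReal.toReal_mul, ENNReal.toReal_mul, ← ENNReal.toReal_rpow, ← ENNReal.toReal_rpow,
          ENNReal.toReal_add hMμ' hMν', ENNReal.toReal_ofNat,
          integral_norm_rpow_eq_toReal_lintegral (f := fun x => x) aestronglyMeasurable_id hp0.le,
          integral_norm_rpow_eq_toReal_lintegral (f := fun x => x) aestronglyMeasurable_id hp0.le]

theorem stmt0_general (p q : ℝ) (hq1 : 1 ≤ q) (hqp : q < p) :
    ∃ C : ℝ, 0 < C ∧ ∀ (d : ℕ) (μ ν : Measure (EuclideanSpace ℝ (Fin d)))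
      (f g : EuclideanSpace ℝ (Fin d) → ℝ),
      IsProbabilityMeasure μ → IsProbabilityMeasure ν →
      μ = volume.withDensity (fun x => ENNReal.ofReal (f x)) →
      ν = volume.withDensity (fun x => ENNReal.ofReal (g x)) →
      Integrable f → Integrable g →
      Integrable (fun x => ‖x‖ ^ p) μ → Integrable (fun x => ‖x‖ ^ p) ν →
      wassersteinDist q μ ν ≤
        C * ((∫ x, ‖x‖ ^ p ∂μ) + ∫ x, ‖x‖ ^ p ∂ν) ^ (1 / p) *
          (∫ x, |f x - g x|) ^ (1 / q - 1 / p) := by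
  refine ⟨2, two_pos, fun d μ ν f g _ _ hμ hν hf hg hMμ hMν => ?_⟩
  have hF := hf.aemeasurable.ennreal_ofReal
  have hG := hg.aemeasurable.ennreal_ofReal
  refine (wassersteinDist_le_of_eq_add
    (hμ.trans (withDensity_eq_withDensity_inf_add_withDensity_tsub hF hG))
    (hν.trans (by rw [inf_comm]; exact withDensity_eq_withDensity_inf_add_withDensity_tsub hG hF))
    hq1 hqp.le hMμ hMν).trans ?_
  have hθ : 0 ≤ 1 / q - 1 / p :=
    sub_nonneg.mpr (one_div_le_one_div_of_le (zero_lt_one.trans_le hq1) hqp.le)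
  gcongr
  exact ENNReal.toReal_le_of_le_ofReal (integral_nonneg fun x => abs_nonneg _)
    (withDensity_ofReal_tsub_univ_le (hf.sub hg))

/-- For probability measures `μ, ν` on `ℝ^d` with densities `f, g ∈ L¹` and
finite `p`-th moments (`p > 1`), for every `1 ≤ q < p` there is a constant `C = C(p,q)`
such that `W_q(μ,ν) ≤ C (M_p(μ) + M_p(ν))^{1/p} ‖f - g‖_{L¹}^{1/q - 1/p}`. -/
theorem stmt0 (p q : ℝ) (hp : 1 < p) (hq1 : 1 ≤ q) (hqp : q < p) :
    ∃ C : ℝ, 0 < C ∧ ∀ (d : ℕ) (μ ν : Measure (EuclideanSpace ℝ (Fin d)))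
      (f g : EuclideanSpace ℝ (Fin d) → ℝ),
      IsProbabilityMeasure μ → IsProbabilityMeasure ν →
      μ = volume.withDensity (fun x => ENNReal.ofReal (f x)) →
      ν = volume.withDensity (fun x => ENNReal.ofReal (g x)) →
      Integrable f → Integrable g →
      Integrable (fun x => ‖x‖ ^ p) μ → Integrable (fun x => ‖x‖ ^ p) ν →
      wassersteinDist q μ ν ≤
        C * ((∫ x, ‖x‖ ^ p ∂μ) + ∫ x, ‖x‖ ^ p ∂ν) ^ (1 / p) *
          (∫ x, |f x - g x|) ^ (1 / q - 1 / p) :=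
  stmt0_general p q hq1 hqp
end

section
/- Let f, g, h : ℝ^d → [0,∞) be measurable with f(x)^{1/2} g(y)^{1/2} ≤ h((x+y)/2) for all x, y ∈ ℝ^d (Prékopa condition with s = 1/2). Then (∫f)^{1/2}(∫g)^{1/2} ≤ ∫h. -/
/-!
In dimension one, if `sup φ = sup ψ` then every level `t` below the common supremum gives nonempty
superlevel sets, and the one-dimensional Brunn–Minkowski inequality `|A| + |B| ≤ |A + B|` (proved
by translating compact sets so that they touch at one point) gives
`|{φ ≥ t}| + |{ψ ≥ t}| ≤ 2 |{χ ≥ t}|` as soon as `min (φ x) (ψ y) ≤ χ ((x + y)/2)`. Integrating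
over `t` (layer cake) gives `∫φ + ∫ψ ≤ 2 ∫χ`. Rescaling `φ ↦ cφ`, `ψ ↦ ψ/c` equalizes the suprema
without changing `φ^{1/2} ψ^{1/2}`, and AM-GM yields `(∫φ)^{1/2} (∫ψ)^{1/2} ≤ ∫χ`; truncation at
height `n` removes the boundedness assumption. The inequality then tensorizes by Tonelli: the
fibre integrals satisfy the one-dimensional hypothesis by the inequality in the fibre.
-/

open MeasureTheory Set
open scoped ENNReal Pointwise

namespace ENNReal

theorem rpow_half_mul_rpow_half_self (a : ℝ≥0∞) : a ^ (1 / 2 : ℝ) * a ^ (1 / 2 : ℝ) = a := by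
  rw [← ENNReal.rpow_add_of_nonneg _ _ (by norm_num) (by norm_num)]
  norm_num

theorem min_le_rpow_half_mul_rpow_half (a b : ℝ≥0∞) :
    min a b ≤ a ^ (1 / 2 : ℝ) * b ^ (1 / 2 : ℝ) := by
  rw [← rpow_half_mul_rpow_half_self (min a b)]
  gcongr
  exacts [min_le_left a b, min_le_right a b]

theorem rpow_half_mul_rpow_half_le_add_div_two (a b : ℝ≥0∞) :
    a ^ (1 / 2 : ℝ) * b ^ (1 / 2 : ℝ) ≤ (a + b) / 2 := by
  have h := young_inequality (a ^ (1 / 2 : ℝ)) (b ^ (1 / 2 : ℝ)) Real.HolderConjugate.two_two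
  simp only [← rpow_mul] at h
  norm_num at h
  rwa [ENNReal.add_div]

theorem mul_rpow_mul_inv_mul_rpow {c : ℝ≥0∞} (hc₀ : c ≠ 0) (hc : c ≠ ∞) (a b : ℝ≥0∞) {p : ℝ}
    (hp : 0 ≤ p) : (c * a) ^ p * (c⁻¹ * b) ^ p = a ^ p * b ^ p := by
  rw [mul_rpow_of_nonneg _ _ hp, mul_rpow_of_nonneg _ _ hp, mul_mul_mul_comm,
    ← mul_rpow_of_nonneg _ _ hp, ENNReal.mul_inv_cancel hc₀ hc, one_rpow, one_mul]

theorem iSup_rpow_mul_iSup_rpow_le {ι : Type*} [Preorder ι] [IsDirectedOrder ι] {a b : ι → ℝ≥0∞}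
    (ha : Monotone a) (hb : Monotone b) {p : ℝ} (hp : 0 < p) {c : ℝ≥0∞}
    (h : ∀ i, a i ^ p * b i ^ p ≤ c) : (⨆ i, a i) ^ p * (⨆ i, b i) ^ p ≤ c := by
  have hrpow (f : ι → ℝ≥0∞) : (⨆ i, f i) ^ p = ⨆ i, f i ^ p := (orderIsoRpow p hp).map_iSup f
  rw [hrpow, hrpow]
  refine mul_le_of_forall_lt fun a' ha' b' hb' => ?_
  obtain ⟨i, hi⟩ := lt_iSup_iff.1 ha'
  obtain ⟨j, hj⟩ := lt_iSup_iff.1 hb'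
  obtain ⟨k, hik, hjk⟩ := directed_of (· ≤ ·) i j
  calc a' * b' ≤ a k ^ p * b k ^ p := by
        gcongr
        exacts [hi.le.trans (rpow_le_rpow (ha hik) hp.le),
          hj.le.trans (rpow_le_rpow (hb hjk) hp.le)]
    _ ≤ c := h k

theorem ofReal_rpow_mul_ofReal_rpow_le (a b : ℝ) {p : ℝ} (hp : 0 < p) :
    ENNReal.ofReal a ^ p * ENNReal.ofReal b ^ p ≤ ENNReal.ofReal (a ^ p * b ^ p) := by
  rcases lt_or_ge a 0 with ha | ha
  · simp [ENNReal.ofReal_of_nonpos ha.le, hp]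
  rcases lt_or_ge b 0 with hb | hb
  · simp [ENNReal.ofReal_of_nonpos hb.le, hp]
  rw [ofReal_rpow_of_nonneg ha hp.le, ofReal_rpow_of_nonneg hb hp.le,
    ofReal_mul (Real.rpow_nonneg ha p)]

end ENNReal

theorem MeasureTheory.lintegral_eq_lintegral_meas_ofReal_le {α : Type*} [MeasurableSpace α]
    (μ : Measure α) {φ : α → ℝ≥0∞} (hφ : Measurable φ) (hφ_top : ∀ x, φ x ≠ ∞) :
    ∫⁻ x, φ x ∂μ = ∫⁻ t in Ioi 0, μ {x | ENNReal.ofReal t ≤ φ x} := by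
  have h := lintegral_eq_lintegral_meas_le μ (ae_of_all _ fun x => (φ x).toReal_nonneg)
    hφ.ennreal_toReal.aemeasurable
  simpa only [ENNReal.ofReal_toReal (hφ_top _), ← ENNReal.ofReal_le_iff_le_toReal (hφ_top _)]
    using h

def HasPrekopaLeindler {E : Type*} [AddCommGroup E] [Module ℝ E] [MeasurableSpace E]
    (μ : Measure E) : Prop :=
  ∀ ⦃φ ψ χ : E → ℝ≥0∞⦄, Measurable φ → Measurable ψ → Measurable χ →
    (∀ x y, φ x ^ (1 / 2 : ℝ) * ψ y ^ (1 / 2 : ℝ) ≤ χ (midpoint ℝ x y)) →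
    (∫⁻ x, φ x ∂μ) ^ (1 / 2 : ℝ) * (∫⁻ x, ψ x ∂μ) ^ (1 / 2 : ℝ) ≤ ∫⁻ x, χ x ∂μ

namespace Real

theorem volume_add_volume_le_volume_add_of_isCompact {K L : Set ℝ} (hK : IsCompact K)
    (hL : IsCompact L) (hK₀ : K.Nonempty) (hL₀ : L.Nonempty) :
    volume K + volume L ≤ volume (K + L) := by
  set a := sSup K
  set b := sInf L
  have ha : a ∈ K := hK.sSup_mem hK₀
  have hb : b ∈ L := hL.sInf_mem hL₀
  -- The translates `b +ᵥ K` and `a +ᵥ L` of `K` and `L` lie in `K + L` and, as `a = max K` and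
  -- `b = min L`, they meet only at `a + b`.
  have hinter : (b +ᵥ K) ∩ (a +ᵥ L) ⊆ {a + b} := by
    rintro _ ⟨⟨x, hx, rfl⟩, ⟨y, hy, hxy⟩⟩
    have := le_csSup hK.bddAbove hx
    have := csInf_le hL.bddBelow hy
    simp only [vadd_eq_add, mem_singleton_iff] at hxy ⊢
    linarith
  calc volume K + volume L = volume (b +ᵥ K) + volume (a +ᵥ L) := by
        rw [measure_vadd, measure_vadd]
    _ = volume ((b +ᵥ K) ∪ (a +ᵥ L)) :=
        (measure_union₀ (hL.measurableSet.const_vadd a).nullMeasurableSet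
          (measure_mono_null hinter (measure_singleton _))).symm
    _ ≤ volume (K + L) := by
        refine measure_mono (union_subset ?_ (vadd_set_subset_add ha))
        rw [add_comm K L]
        exact vadd_set_subset_add hb

theorem volume_add_volume_le_volume_add {A B : Set ℝ} (hA : MeasurableSet A)
    (hB : MeasurableSet B) (hA₀ : A.Nonempty) (hB₀ : B.Nonempty) :
    volume A + volume B ≤ volume (A + B) := by
  obtain ⟨x, hx⟩ := hA₀
  obtain ⟨y, hy⟩ := hB₀
  rw [hA.measure_eq_iSup_isCompact, hB.measure_eq_iSup_isCompact]
  simp_rw [iSup_and']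
  refine ENNReal.biSup_add_biSup_le (s := {K | K ⊆ A ∧ IsCompact K})
    (t := {L | L ⊆ B ∧ IsCompact L}) ⟨∅, empty_subset _, isCompact_empty⟩
    ⟨∅, empty_subset _, isCompact_empty⟩ fun K ⟨hKA, hK⟩ L ⟨hLB, hL⟩ => ?_
  -- Adding a point keeps the compact sets inside `A` and `B` and makes them nonempty.
  calc volume K + volume L ≤ volume (insert x K) + volume (insert y L) :=
        add_le_add (measure_mono (subset_insert _ _)) (measure_mono (subset_insert _ _))
    _ ≤ volume (insert x K + insert y L) :=
        volume_add_volume_le_volume_add_of_isCompact (hK.insert x) (hL.insert y)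
          (insert_nonempty _ _) (insert_nonempty _ _)
    _ ≤ volume (A + B) :=
        measure_mono (add_subset_add (insert_subset hx hKA) (insert_subset hy hLB))

theorem volume_add_volume_le_two_mul_volume {A B C : Set ℝ} (hA : MeasurableSet A)
    (hB : MeasurableSet B) (hA₀ : A.Nonempty) (hB₀ : B.Nonempty)
    (hC : ∀ x ∈ A, ∀ y ∈ B, midpoint ℝ x y ∈ C) :
    volume A + volume B ≤ 2 * volume C := by
  have hsub : A + B ⊆ (2 : ℝ) • C := by
    rintro _ ⟨x, hx, y, hy, rfl⟩
    show x + y ∈ _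
    rw [show x + y = (2 : ℝ) • midpoint ℝ x y by rw [two_smul, midpoint_add_self]]
    exact smul_mem_smul_set (hC x hx y hy)
  calc volume A + volume B ≤ volume (A + B) := volume_add_volume_le_volume_add hA hB hA₀ hB₀
    _ ≤ volume ((2 : ℝ) • C) := measure_mono hsub
    _ = 2 * volume C := by simp [Measure.addHaar_smul]

theorem lintegral_add_lintegral_le_two_mul_of_iSup_eq {φ ψ χ : ℝ → ℝ≥0∞} (hφ : Measurable φ)
    (hψ : Measurable ψ) (hχ : Measurable χ) (hsup : ⨆ x, φ x = ⨆ y, ψ y)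
    (hsup_top : ⨆ x, φ x ≠ ∞) (hmin : ∀ x y, min (φ x) (ψ y) ≤ χ (midpoint ℝ x y)) :
    (∫⁻ x, φ x) + ∫⁻ x, ψ x ≤ 2 * ∫⁻ x, χ x := by
  set M := ⨆ x, φ x
  have hφM (x : ℝ) : φ x ≤ M := le_iSup φ x
  have hψM (y : ℝ) : ψ y ≤ M := hsup ▸ le_iSup ψ y
  -- Capping `χ` at `M` makes it finite without affecting the hypothesis.
  set χ' := fun x => min (χ x) M
  have hlevel (s : ℝ≥0∞) (hs : s ≠ M) :
      volume {x | s ≤ φ x} + volume {x | s ≤ ψ x} ≤ 2 * volume {x | s ≤ χ' x} := by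
    rcases hs.lt_or_gt with hs | hs
    · obtain ⟨x₀, hx₀⟩ := lt_iSup_iff.1 hs
      obtain ⟨y₀, hy₀⟩ := lt_iSup_iff.1 (hsup ▸ hs)
      refine volume_add_volume_le_two_mul_volume (measurableSet_le measurable_const hφ)
        (measurableSet_le measurable_const hψ) ⟨x₀, hx₀.le⟩ ⟨y₀, hy₀.le⟩ fun x hx y hy => ?_
      exact le_min ((le_min hx hy).trans (hmin x y)) (hx.trans (hφM x))
    · have hempty (ξ : ℝ → ℝ≥0∞) (hξ : ∀ x, ξ x ≤ M) : {x | s ≤ ξ x} = ∅ :=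
        eq_empty_of_forall_notMem fun x hx => (hs.trans_le hx).not_ge (hξ x)
      simp [hempty φ hφM, hempty ψ hψM]
  have hae : ∀ᵐ t ∂volume.restrict (Ioi 0), ENNReal.ofReal t ≠ M := by
    refine (ae_restrict_iff' measurableSet_Ioi).2 ?_
    filter_upwards [Measure.ae_ne volume M.toReal] with t ht ht₀ htM
    exact ht (htM ▸ (ENNReal.toReal_ofReal ht₀.le).symm)
  have hχ'_top (x : ℝ) : χ' x ≠ ∞ := ne_top_of_le_ne_top hsup_top (min_le_right _ _)
  rw [lintegral_eq_lintegral_meas_ofReal_le volume hφ fun x => ne_top_of_le_ne_top hsup_top (hφM x),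
    lintegral_eq_lintegral_meas_ofReal_le volume hψ fun x => ne_top_of_le_ne_top hsup_top (hψM x)]
  calc _ ≤ ∫⁻ t in Ioi 0, (volume {x | ENNReal.ofReal t ≤ φ x} +
          volume {x | ENNReal.ofReal t ≤ ψ x}) := le_lintegral_add _ _
    _ ≤ ∫⁻ t in Ioi 0, 2 * volume {x | ENNReal.ofReal t ≤ χ' x} :=
        lintegral_mono_ae (hae.mono fun t ht => hlevel _ ht)
    _ = 2 * ∫⁻ x, χ' x := by
        rw [lintegral_const_mul' _ _ (by norm_num),
          lintegral_eq_lintegral_meas_ofReal_le volume (hχ.min measurable_const) hχ'_top]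
    _ ≤ 2 * ∫⁻ x, χ x := by gcongr with x; exact min_le_left _ _

theorem prekopaLeindler_of_iSup_ne_top {φ ψ χ : ℝ → ℝ≥0∞}
    (hφ : Measurable φ) (hψ : Measurable ψ) (hχ : Measurable χ) (hφ_top : ⨆ x, φ x ≠ ∞)
    (hψ_top : ⨆ y, ψ y ≠ ∞)
    (h : ∀ x y, φ x ^ (1 / 2 : ℝ) * ψ y ^ (1 / 2 : ℝ) ≤ χ (midpoint ℝ x y)) :
    (∫⁻ x, φ x) ^ (1 / 2 : ℝ) * (∫⁻ x, ψ x) ^ (1 / 2 : ℝ) ≤ ∫⁻ x, χ x := by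
  set F := ⨆ x, φ x
  set G := ⨆ y, ψ y
  rcases eq_or_ne F 0 with hF | hF
  · simp [show φ = 0 from funext (ENNReal.iSup_eq_zero.1 hF)]
  rcases eq_or_ne G 0 with hG | hG
  · simp [show ψ = 0 from funext (ENNReal.iSup_eq_zero.1 hG)]
  -- Rescale `φ` by `c` and `ψ` by `c⁻¹` so that both have supremum `√(FG)`.
  set c := (G / F) ^ (1 / 2 : ℝ)
  have hc₀ : c ≠ 0 := by simp [c, hG, hφ_top]
  have hc : c ≠ ∞ := by simp [c, ENNReal.div_eq_top, hF, hψ_top]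
  have hcF : c * F = c⁻¹ * G := by
    rw [← ENNReal.div_mul_cancel hF hφ_top (b := G), ← ENNReal.rpow_half_mul_rpow_half_self (G / F),
      ← mul_assoc, ← mul_assoc, ENNReal.inv_mul_cancel hc₀ hc, one_mul]
  have hsum := lintegral_add_lintegral_le_two_mul_of_iSup_eq (hφ.const_mul c) (hψ.const_mul c⁻¹) hχ
    (by rw [← ENNReal.mul_iSup, ← ENNReal.mul_iSup, hcF])
    (by rw [← ENNReal.mul_iSup]; exact ENNReal.mul_ne_top hc hφ_top)
    fun x y => (ENNReal.min_le_rpow_half_mul_rpow_half _ _).trans <|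
      (ENNReal.mul_rpow_mul_inv_mul_rpow hc₀ hc _ _ (by norm_num)).trans_le (h x y)
  rw [lintegral_const_mul _ hφ, lintegral_const_mul _ hψ] at hsum
  calc (∫⁻ x, φ x) ^ (1 / 2 : ℝ) * (∫⁻ x, ψ x) ^ (1 / 2 : ℝ)
      = (c * ∫⁻ x, φ x) ^ (1 / 2 : ℝ) * (c⁻¹ * ∫⁻ x, ψ x) ^ (1 / 2 : ℝ) :=
        (ENNReal.mul_rpow_mul_inv_mul_rpow hc₀ hc _ _ (by norm_num)).symm
    _ ≤ ((c * ∫⁻ x, φ x) + c⁻¹ * ∫⁻ x, ψ x) / 2 :=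
        ENNReal.rpow_half_mul_rpow_half_le_add_div_two _ _
    _ ≤ ∫⁻ x, χ x := ENNReal.div_le_of_le_mul' hsum

theorem hasPrekopaLeindler_volume : HasPrekopaLeindler (volume : Measure ℝ) := by
  intro φ ψ χ hφ hψ hχ h
  have hlim {ξ : ℝ → ℝ≥0∞} (hξ : Measurable ξ) : ∫⁻ x, ξ x = ⨆ n : ℕ, ∫⁻ x, min (ξ x) n := by
    rw [← lintegral_iSup (fun n => hξ.min measurable_const)
      fun m n hmn x => min_le_min_left _ (Nat.mono_cast hmn)]
    simp_rw [← inf_iSup_eq, ENNReal.iSup_natCast, inf_top_eq]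
  have hmono {ξ : ℝ → ℝ≥0∞} : Monotone fun n : ℕ => ∫⁻ x, min (ξ x) n :=
    fun m n hmn => lintegral_mono fun x => min_le_min_left _ (Nat.mono_cast hmn)
  have hsup_top (ξ : ℝ → ℝ≥0∞) (n : ℕ) : ⨆ x, min (ξ x) n ≠ ∞ :=
    ne_top_of_le_ne_top (ENNReal.natCast_ne_top n) (iSup_le fun x => min_le_right _ _)
  rw [hlim hφ, hlim hψ]
  refine ENNReal.iSup_rpow_mul_iSup_rpow_le hmono hmono (by norm_num) fun n => ?_
  refine prekopaLeindler_of_iSup_ne_top (hφ.min measurable_const)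
    (hψ.min measurable_const) hχ (hsup_top φ n) (hsup_top ψ n) fun x y => le_trans ?_ (h x y)
  gcongr <;> exact min_le_left _ _

end Real

section HasPrekopaLeindler

variable {E F : Type*} [AddCommGroup E] [Module ℝ E] [MeasurableSpace E]
  [AddCommGroup F] [Module ℝ F] [MeasurableSpace F]

theorem HasPrekopaLeindler.dirac (a : E) : HasPrekopaLeindler (Measure.dirac a) := by
  intro φ ψ χ hφ hψ hχ h
  simpa [lintegral_dirac' a hφ, lintegral_dirac' a hψ, lintegral_dirac' a hχ] using h a a

theorem HasPrekopaLeindler.prod {μ : Measure E} {ν : Measure F} [SFinite ν]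
    (hμ : HasPrekopaLeindler μ) (hν : HasPrekopaLeindler ν) : HasPrekopaLeindler (μ.prod ν) := by
  intro φ ψ χ hφ hψ hχ h
  rw [lintegral_prod _ hφ.aemeasurable, lintegral_prod _ hψ.aemeasurable,
    lintegral_prod _ hχ.aemeasurable]
  exact hμ hφ.lintegral_prod_right' hψ.lintegral_prod_right' hχ.lintegral_prod_right' fun s t =>
    hν (hφ.comp measurable_prodMk_left) (hψ.comp measurable_prodMk_left)
      (hχ.comp measurable_prodMk_left) fun z w => h (s, z) (t, w)

theorem MeasureTheory.MeasurePreserving.hasPrekopaLeindler {μ : Measure E} {ν : Measure F}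
    {e : F → E} (he : MeasurePreserving e ν μ)
    (he_mid : ∀ x y, e (midpoint ℝ x y) = midpoint ℝ (e x) (e y)) (hν : HasPrekopaLeindler ν) :
    HasPrekopaLeindler μ := by
  intro φ ψ χ hφ hψ hχ h
  rw [← he.lintegral_comp hφ, ← he.lintegral_comp hψ, ← he.lintegral_comp hχ]
  exact hν (hφ.comp he.measurable) (hψ.comp he.measurable) (hχ.comp he.measurable) fun x y =>
    (he_mid x y).symm ▸ h (e x) (e y)

end HasPrekopaLeindler

theorem hasPrekopaLeindler_volume_pi : ∀ d : ℕ, HasPrekopaLeindler (volume : Measure (Fin d → ℝ))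
  | 0 => by
    rw [volume_pi, Measure.pi_of_empty]
    exact .dirac _
  | n + 1 => by
    refine (volume_preserving_piFinSuccAbove (fun _ => ℝ) 0).symm.hasPrekopaLeindler ?_
      (Real.hasPrekopaLeindler_volume.prod (hasPrekopaLeindler_volume_pi n))
    intro x y
    funext i
    refine Fin.cases ?_ (fun j => ?_) i <;> rfl

theorem stmt11_general {d : ℕ} (f g h : EuclideanSpace ℝ (Fin d) → ℝ)
    (hfm : Measurable f) (hgm : Measurable g) (hhm : Measurable h)
    (hcond : ∀ x y, f x ^ (1 / 2 : ℝ) * g y ^ (1 / 2 : ℝ) ≤ h (midpoint ℝ x y)) :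
    (∫⁻ x, ENNReal.ofReal (f x)) ^ (1 / 2 : ℝ) *
        (∫⁻ x, ENNReal.ofReal (g x)) ^ (1 / 2 : ℝ) ≤
      ∫⁻ x, ENNReal.ofReal (h x) :=
  (PiLp.volume_preserving_toLp (Fin d)).hasPrekopaLeindler (fun _ _ => rfl)
    (hasPrekopaLeindler_volume_pi d) hfm.ennreal_ofReal hgm.ennreal_ofReal hhm.ennreal_ofReal
    fun x y => (ENNReal.ofReal_rpow_mul_ofReal_rpow_le _ _ (by norm_num)).trans
      (ENNReal.ofReal_le_ofReal (hcond x y))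

/-- the Prékopa–Leindler inequality with `s = 1/2`: if
`f(x)^{1/2} g(y)^{1/2} ≤ h((x+y)/2)` for all `x, y`, then
`(∫f)^{1/2} (∫g)^{1/2} ≤ ∫h`. -/
theorem stmt11 {d : ℕ} (f g h : EuclideanSpace ℝ (Fin d) → ℝ)
    (hfm : Measurable f) (hgm : Measurable g) (hhm : Measurable h)
    (hf0 : ∀ x, 0 ≤ f x) (hg0 : ∀ x, 0 ≤ g x) (hh0 : ∀ x, 0 ≤ h x)
    (hcond : ∀ x y, f x ^ (1 / 2 : ℝ) * g y ^ (1 / 2 : ℝ) ≤ h (midpoint ℝ x y)) :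
    (∫⁻ x, ENNReal.ofReal (f x)) ^ (1 / 2 : ℝ) *
        (∫⁻ x, ENNReal.ofReal (g x)) ^ (1 / 2 : ℝ) ≤
      ∫⁻ x, ENNReal.ofReal (h x) :=
  stmt11_general f g h hfm hgm hhm hcond
end

section
/- Let μ, ν be probability measures on a compact convex set Ω ⊂ ℝ^d, and let φ_μ, φ_ν be Lipschitz functions with Lip(φ_μ − φ_ν) ≤ L. If φ_μ maximizes the concave functional J_μ and the first variation of J_μ at φ_ν in direction (φ_μ − φ_ν) equals ∫(φ_μ − φ_ν) d(μ_{φ_ν*} − μ) where μ_{φ_ν*} = ν, then 0 ≤ J_μ(φ_μ) − J_μ(φ_ν) ≤ L · W₁(μ, ν). -/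
/-!
Pair a coupling `γ` of `μ` and `ν` with the Lipschitz function `f = φμ - φν`: integrating
`f y - f x ≤ L ‖x - y‖` against `γ` bounds the first variation `∫ f d(ν - μ)`, hence
`J φμ - J φν`, by `L ∫ ‖x - y‖ dγ`, and taking the infimum over couplings gives `L · W₁(μ, ν)`.
Everything is integrable because `μ`, `ν`, and so every coupling, live on the compact set `Ω`.
-/

open MeasureTheory

noncomputable def W1 {d : ℕ} (μ ν : Measure (EuclideanSpace ℝ (Fin d))) : ℝ :=
  sInf { r : ℝ | ∃ γ : Measure (EuclideanSpace ℝ (Fin d) × EuclideanSpace ℝ (Fin d)),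
    γ.fst = μ ∧ γ.snd = ν ∧ r = ∫ p, ‖p.1 - p.2‖ ∂γ }

theorem Continuous.integrable_of_ae_mem_isCompact {X E : Type*} [TopologicalSpace X]
    [T2Space X] [MeasurableSpace X] [OpensMeasurableSpace X] [NormedAddCommGroup E]
    {μ : Measure X} [IsFiniteMeasure μ] {K : Set X} {f : X → E} (hf : Continuous f)
    (hK : IsCompact K) (hμK : ∀ᵐ x ∂μ, x ∈ K) :
    Integrable f μ := by
  rw [← Measure.restrict_eq_self_of_ae_mem hμK]
  exact hf.continuousOn.integrableOn_compact hK

namespace MeasureTheory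

theorem Measure.isFiniteMeasure_of_fst_eq {X Y : Type*} [MeasurableSpace X] [MeasurableSpace Y]
    {γ : Measure (X × Y)} {μ : Measure X} [IsFiniteMeasure μ] (hγ : γ.fst = μ) :
    IsFiniteMeasure γ :=
  ⟨by rw [← Measure.fst_univ, hγ]; exact measure_lt_top μ _⟩

theorem ae_mem_prod_of_fst_of_snd {X Y : Type*} [MeasurableSpace X] [MeasurableSpace Y]
    {γ : Measure (X × Y)} {s : Set X} {t : Set Y}
    (hs : ∀ᵐ x ∂γ.fst, x ∈ s) (ht : ∀ᵐ y ∂γ.snd, y ∈ t) : ∀ᵐ p ∂γ, p ∈ s ×ˢ t :=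
  (ae_of_ae_map measurable_fst.aemeasurable hs).and (ae_of_ae_map measurable_snd.aemeasurable ht)

/-- Kantorovich duality, easy direction, for a single coupling. -/
theorem integral_sub_integral_le_of_lipschitzWith {E : Type*} [PseudoMetricSpace E]
    [MeasurableSpace E] [OpensMeasurableSpace E] {f : E → ℝ} {K : NNReal}
    (hf : LipschitzWith K f) {γ : Measure (E × E)}
    (hfst : Integrable f γ.fst) (hsnd : Integrable f γ.snd)
    (hdist : Integrable (fun p => dist p.1 p.2) γ) :
    ∫ y, f y ∂γ.snd - ∫ x, f x ∂γ.fst ≤ K * ∫ p, dist p.1 p.2 ∂γ := by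
  have hfm := hf.continuous.aestronglyMeasurable (μ := γ.fst)
  have hfm' := hf.continuous.aestronglyMeasurable (μ := γ.snd)
  have h₁ : Integrable (fun p => f p.1) γ :=
    (integrable_map_measure hfm measurable_fst.aemeasurable).mp hfst
  have h₂ : Integrable (fun p => f p.2) γ :=
    (integrable_map_measure hfm' measurable_snd.aemeasurable).mp hsnd
  rw [Measure.fst, integral_map measurable_fst.aemeasurable hfm, Measure.snd,
    integral_map measurable_snd.aemeasurable hfm', ← integral_sub h₂ h₁, ← integral_const_mul]
  refine integral_mono (h₂.sub h₁) (hdist.const_mul _) fun p => ?_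
  calc f p.2 - f p.1 ≤ dist (f p.2) (f p.1) := le_abs_self _
    _ ≤ K * dist p.2 p.1 := hf.dist_le_mul _ _
    _ = K * dist p.1 p.2 := by rw [dist_comm]

end MeasureTheory

theorem le_mul_W1_of_forall_coupling {d : ℕ} {μ ν : Measure (EuclideanSpace ℝ (Fin d))}
    [IsProbabilityMeasure μ] [IsProbabilityMeasure ν] {a c : ℝ} (hc : 0 ≤ c)
    (h : ∀ γ : Measure (EuclideanSpace ℝ (Fin d) × EuclideanSpace ℝ (Fin d)),
      γ.fst = μ → γ.snd = ν → a ≤ c * ∫ p, ‖p.1 - p.2‖ ∂γ) :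
    a ≤ c * W1 μ ν := by
  have hprod := h (μ.prod ν) (by simp) (by simp)
  rcases hc.eq_or_lt with rfl | hc
  · simpa using hprod
  rw [W1, ← div_le_iff₀' hc]
  refine le_csInf ⟨_, μ.prod ν, by simp, by simp, rfl⟩ ?_
  rintro r ⟨γ, hγμ, hγν, rfl⟩
  exact (div_le_iff₀' hc).mpr (h γ hγμ hγν)

theorem stmt14_general {d : ℕ} (Ω : Set (EuclideanSpace ℝ (Fin d)))
    (hΩc : IsCompact Ω)
    (μ ν : Measure (EuclideanSpace ℝ (Fin d)))
    [IsProbabilityMeasure μ] [IsProbabilityMeasure ν]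
    (hμΩ : μ Ωᶜ = 0) (hνΩ : ν Ωᶜ = 0)
    (J : (EuclideanSpace ℝ (Fin d) → ℝ) → ℝ)
    (φμ φν : EuclideanSpace ℝ (Fin d) → ℝ) (L : ℝ) (hL : 0 ≤ L)
    (hLip : LipschitzWith (Real.toNNReal L) (fun x => φμ x - φν x))
    (hmax : ∀ ψ : EuclideanSpace ℝ (Fin d) → ℝ, J ψ ≤ J φμ)
    (hfirstvar : J φμ - J φν ≤
      (∫ x, (φμ x - φν x) ∂ν) - ∫ x, (φμ x - φν x) ∂μ) :
    0 ≤ J φμ - J φν ∧ J φμ - J φν ≤ L * W1 μ ν := by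
  refine ⟨sub_nonneg.mpr (hmax φν), le_mul_W1_of_forall_coupling hL fun γ hγμ hγν => ?_⟩
  have := Measure.isFiniteMeasure_of_fst_eq hγμ
  subst hγμ hγν
  have hγΩ : ∀ᵐ p ∂γ, p ∈ Ω ×ˢ Ω := ae_mem_prod_of_fst_of_snd hμΩ hνΩ
  have hdist : Integrable (fun p => dist p.1 p.2) γ :=
    continuous_dist.integrable_of_ae_mem_isCompact (hΩc.prod hΩc) hγΩ
  calc J φμ - J φν ≤ _ := hfirstvar
    _ ≤ L * ∫ p, dist p.1 p.2 ∂γ := by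
      simpa only [Real.coe_toNNReal L hL] using integral_sub_integral_le_of_lipschitzWith hLip
        (hLip.continuous.integrable_of_ae_mem_isCompact hΩc hμΩ)
        (hLip.continuous.integrable_of_ae_mem_isCompact hΩc hνΩ) hdist
    _ = L * ∫ p, ‖p.1 - p.2‖ ∂γ := by simp only [dist_eq_norm]

/-- let `μ, ν` be probability measures on a compact convex `Ω ⊂ ℝ^d`,
`φ_μ, φ_ν` Lipschitz with `Lip(φ_μ - φ_ν) ≤ L`; if `φ_μ` maximizes the concave
functional `J_μ` and the first-variation (concavity) bound
`J_μ(φ_μ) - J_μ(φ_ν) ≤ ∫ (φ_μ - φ_ν) d(ν - μ)` holds (where `ν = μ_{φ_ν*}`), then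
`0 ≤ J_μ(φ_μ) - J_μ(φ_ν) ≤ L · W₁(μ, ν)`. -/
theorem stmt14 {d : ℕ} (Ω : Set (EuclideanSpace ℝ (Fin d)))
    (hΩc : IsCompact Ω) (hΩconv : Convex ℝ Ω)
    (μ ν : Measure (EuclideanSpace ℝ (Fin d)))
    [IsProbabilityMeasure μ] [IsProbabilityMeasure ν]
    (hμΩ : μ Ωᶜ = 0) (hνΩ : ν Ωᶜ = 0)
    (J : (EuclideanSpace ℝ (Fin d) → ℝ) → ℝ)
    (φμ φν : EuclideanSpace ℝ (Fin d) → ℝ) (L : ℝ) (hL : 0 ≤ L)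
    (hLipμ : ∃ K : NNReal, LipschitzWith K φμ)
    (hLipν : ∃ K : NNReal, LipschitzWith K φν)
    (hLip : LipschitzWith (Real.toNNReal L) (fun x => φμ x - φν x))
    (hmax : ∀ ψ : EuclideanSpace ℝ (Fin d) → ℝ, J ψ ≤ J φμ)
    (hfirstvar : J φμ - J φν ≤
      (∫ x, (φμ x - φν x) ∂ν) - ∫ x, (φμ x - φν x) ∂μ) :
    0 ≤ J φμ - J φν ∧ J φμ - J φν ≤ L * W1 μ ν :=
  stmt14_general Ω hΩc μ ν hμΩ hνΩ J φμ φν L hL hLip hmax hfirstvar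
end

section
/- Let ψ : ℝ^d → ℝ be λ-strongly convex and smooth with minimizer x*, and suppose ∫e^{−ψ} < ∞. Define V(p) = ∫|x−x*|^p e^{−ψ(x)}dx for p ≥ 0. Then for every p ≥ 2, V(p) ≤ ((d + p − 2)/λ) V(p−2). -/
set_option maxHeartbeats 2000000

open MeasureTheory Set Real Metric
open scoped ENNReal

-- integrability of r^s e^{-g r} on Ioi 0 given quadratic growth
lemma integ_aux {g : ℝ → ℝ} (hc : Continuous g) {lam A : ℝ} (hlam : 0 < lam)
    (hgrow : ∀ r : ℝ, 0 ≤ r → A + lam / 2 * r ^ 2 ≤ g r) {s : ℝ} (hs : 0 ≤ s) :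
    IntegrableOn (fun r : ℝ => r ^ s * Real.exp (-(g r))) (Ioi 0) := by
  have hdom : IntegrableOn (fun r : ℝ => Real.exp (-A) * (r ^ s * Real.exp (-(lam/2) * r ^ 2)))
      (Ioi 0) :=
    (integrableOn_rpow_mul_exp_neg_mul_sq (by linarith) (by linarith : (-1:ℝ) < s)).const_mul _
  refine Integrable.mono' hdom ?_ ?_
  · exact ((Real.continuous_rpow_const hs).mul (hc.neg.rexp)).aestronglyMeasurable
  · filter_upwards [ae_restrict_mem measurableSet_Ioi] with r hr
    have hr0 : (0:ℝ) ≤ r := (le_of_lt hr)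
    have h1 : Real.exp (-(g r)) ≤ Real.exp (-A) * Real.exp (-(lam/2) * r ^ 2) := by
      rw [← Real.exp_add]
      apply Real.exp_le_exp.2
      have := hgrow r hr0
      linarith
    have h2 : (0:ℝ) ≤ r ^ s := Real.rpow_nonneg hr0 s
    rw [Real.norm_eq_abs, abs_of_nonneg (mul_nonneg h2 (Real.exp_nonneg _))]
    calc r ^ s * Real.exp (-(g r)) ≤ r ^ s * (Real.exp (-A) * Real.exp (-(lam/2) * r ^ 2)) :=
          mul_le_mul_of_nonneg_left h1 h2
      _ = Real.exp (-A) * (r ^ s * Real.exp (-(lam/2) * r ^ 2)) := by ring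


lemma fiber_ineq {g G : ℝ → ℝ} (hder : ∀ r : ℝ, HasDerivAt g (G r) r) (hGc : Continuous G)
    {lam A : ℝ} (hlam : 0 < lam)
    (hlow : ∀ r : ℝ, 0 < r → lam * r ≤ G r)
    (hgrow : ∀ r : ℝ, 0 ≤ r → A + lam / 2 * r ^ 2 ≤ g r)
    {q : ℝ} (hq : 1 ≤ q) :
    lam * ∫ r in Ioi (0:ℝ), r ^ (q + 1) * Real.exp (-(g r)) ≤
      q * ∫ r in Ioi (0:ℝ), r ^ (q - 1) * Real.exp (-(g r)) := by
  have hgc : Continuous g := continuous_iff_continuousAt.2 fun r => (hder r).continuousAt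
  have Int1 : IntegrableOn (fun r : ℝ => r ^ (q+1) * Real.exp (-(g r))) (Ioi 0) :=
    integ_aux hgc hlam hgrow (by linarith)
  have Int2 : IntegrableOn (fun r : ℝ => r ^ (q-1) * Real.exp (-(g r))) (Ioi 0) :=
    integ_aux hgc hlam hgrow (by linarith)
  set I₁ := ∫ r in Ioi (0:ℝ), r ^ (q + 1) * Real.exp (-(g r)) with hI₁
  set I₂ := ∫ r in Ioi (0:ℝ), r ^ (q - 1) * Real.exp (-(g r)) with hI₂
  set s : ℕ → Set ℝ := fun n => Ioc (1/((n:ℝ)+1)) ((n:ℝ)+1) with hs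
  have hapos : ∀ n : ℕ, (0:ℝ) < 1/((n:ℝ)+1) := fun n => by positivity
  have hab : ∀ n : ℕ, 1/((n:ℝ)+1) ≤ (n:ℝ)+1 := by
    intro n
    have h1 : (1:ℝ) ≤ (n:ℝ)+1 := by
      have : (0:ℝ) ≤ (n:ℝ) := Nat.cast_nonneg n
      linarith
    calc 1/((n:ℝ)+1) ≤ 1 := by
          rw [div_le_one (by positivity)]; exact h1
      _ ≤ (n:ℝ)+1 := h1
  -- key inequality on each Ioc
  have key : ∀ n : ℕ, lam * ∫ r in s n, r ^ (q + 1) * Real.exp (-(g r)) ≤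
      q * I₂ + (1/((n:ℝ)+1)) ^ q * Real.exp (-A) := by
    intro n
    set a := 1/((n:ℝ)+1) with ha
    set b := (n:ℝ)+1 with hb
    have ha0 : 0 < a := hapos n
    have hab' : a ≤ b := hab n
    -- derivative of h r = r^q * exp (-(g r))
    have hderivh : ∀ r ∈ uIcc a b, HasDerivAt (fun r : ℝ => r ^ q * Real.exp (-(g r)))
        (q * r ^ (q-1) * Real.exp (-(g r)) + r ^ q * (Real.exp (-(g r)) * -(G r))) r := by
      intro r _
      exact (Real.hasDerivAt_rpow_const (Or.inr hq)).mul ((hder r).neg.exp)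
    have hDc : Continuous (fun r : ℝ => q * r ^ (q-1) * Real.exp (-(g r)) +
        r ^ q * (Real.exp (-(g r)) * -(G r))) := by
      have h1 : Continuous (fun r : ℝ => r ^ (q-1)) := Real.continuous_rpow_const (by linarith)
      have h2 : Continuous (fun r : ℝ => r ^ q) := Real.continuous_rpow_const (by linarith)
      exact ((continuous_const.mul h1).mul (hgc.neg.rexp)).add
        (h2.mul ((hgc.neg.rexp).mul hGc.neg))
    have ibp : ∫ r in a..b, (q * r ^ (q-1) * Real.exp (-(g r)) +
          r ^ q * (Real.exp (-(g r)) * -(G r))) =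
        b ^ q * Real.exp (-(g b)) - a ^ q * Real.exp (-(g a)) :=
      intervalIntegral.integral_eq_sub_of_hasDerivAt hderivh (hDc.intervalIntegrable a b)
    have hint1 : IntervalIntegrable (fun r : ℝ => q * r ^ (q-1) * Real.exp (-(g r))) volume a b := by
      have h1 : Continuous (fun r : ℝ => q * r ^ (q-1) * Real.exp (-(g r))) :=
        (continuous_const.mul (Real.continuous_rpow_const (by linarith))).mul (hgc.neg.rexp)
      exact h1.intervalIntegrable a b
    have hint2 : IntervalIntegrable (fun r : ℝ => r ^ q * (Real.exp (-(g r)) * -(G r)))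
        volume a b := by
      have h1 : Continuous (fun r : ℝ => r ^ q * (Real.exp (-(g r)) * -(G r))) :=
        (Real.continuous_rpow_const (by linarith)).mul ((hgc.neg.rexp).mul hGc.neg)
      exact h1.intervalIntegrable a b
    have split := intervalIntegral.integral_add hint1 hint2
    rw [split] at ibp
    -- ∫ a..b of the G-term
    have hGterm : ∫ r in a..b, r ^ q * (Real.exp (-(g r)) * G r) =
        (∫ r in a..b, q * r ^ (q-1) * Real.exp (-(g r)))
          - (b ^ q * Real.exp (-(g b)) - a ^ q * Real.exp (-(g a))) := by
      have : ∫ r in a..b, r ^ q * (Real.exp (-(g r)) * -(G r)) =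
          - ∫ r in a..b, r ^ q * (Real.exp (-(g r)) * G r) := by
        rw [← intervalIntegral.integral_neg]
        congr 1; funext r; ring
      rw [this] at ibp
      linarith
    -- step 1 : lam * ∫_{Ioc} r^{q+1} e^{-g} ≤ ∫_{Ioc} r^q (e^{-g} G r)
    have hIoc1 : IntegrableOn (fun r : ℝ => r ^ (q+1) * Real.exp (-(g r))) (Ioc a b) :=
      Int1.mono_set (fun x hx => lt_of_lt_of_le ha0 hx.1.le)
    have hIoc2 : IntegrableOn (fun r : ℝ => r ^ q * (Real.exp (-(g r)) * G r)) (Ioc a b) := by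
      have h1 : Continuous (fun r : ℝ => r ^ q * (Real.exp (-(g r)) * G r)) :=
        (Real.continuous_rpow_const (by linarith)).mul ((hgc.neg.rexp).mul hGc)
      exact h1.integrableOn_Ioc
    have step1 : lam * ∫ r in s n, r ^ (q + 1) * Real.exp (-(g r)) ≤
        ∫ r in Ioc a b, r ^ q * (Real.exp (-(g r)) * G r) := by
      rw [hs, ← integral_const_mul]
      refine setIntegral_mono_on (hIoc1.const_mul lam) hIoc2 measurableSet_Ioc ?_
      intro r hr
      have hr0 : 0 < r := lt_of_lt_of_le ha0 hr.1.le
      have h1 : r ^ (q+1) = r ^ q * r := by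
        rw [Real.rpow_add hr0, Real.rpow_one]
      have h2 : (0:ℝ) ≤ r ^ q * Real.exp (-(g r)) :=
        mul_nonneg (Real.rpow_nonneg hr0.le q) (Real.exp_pos _).le
      have h3 := hlow r hr0
      calc lam * (r ^ (q+1) * Real.exp (-(g r))) = (lam * r) * (r ^ q * Real.exp (-(g r))) := by
            rw [h1]; ring
        _ ≤ G r * (r ^ q * Real.exp (-(g r))) := mul_le_mul_of_nonneg_right h3 h2
        _ = r ^ q * (Real.exp (-(g r)) * G r) := by ring
    -- step 2 : Ioc integral = interval integral, bound by q I₂ + boundary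
    have hIocIoi : ∫ r in a..b, q * r ^ (q-1) * Real.exp (-(g r)) ≤ q * I₂ := by
      have hsub : ∫ r in Ioc a b, r ^ (q-1) * Real.exp (-(g r)) ≤ I₂ := by
        refine setIntegral_mono_set Int2 ?_ ?_
        · filter_upwards [ae_restrict_mem measurableSet_Ioi] with r hr
          exact mul_nonneg (Real.rpow_nonneg (le_of_lt hr) _) (Real.exp_pos _).le
        · exact HasSubset.Subset.eventuallyLE (fun x hx => lt_of_lt_of_le ha0 hx.1.le)
      have heq : ∫ r in Ioc a b, q * r ^ (q-1) * Real.exp (-(g r)) =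
          q * ∫ r in Ioc a b, r ^ (q-1) * Real.exp (-(g r)) := by
        simp_rw [mul_assoc]
        exact integral_const_mul q _
      rw [intervalIntegral.integral_of_le hab', heq]
      exact mul_le_mul_of_nonneg_left hsub (by linarith)
    have hbnd : a ^ q * Real.exp (-(g a)) ≤ a ^ q * Real.exp (-A) := by
      refine mul_le_mul_of_nonneg_left ?_ (Real.rpow_nonneg ha0.le q)
      apply Real.exp_le_exp.2
      have := hgrow a ha0.le
      nlinarith [sq_nonneg a]
    have hb0 : 0 ≤ b ^ q * Real.exp (-(g b)) :=
      mul_nonneg (Real.rpow_nonneg (by positivity) q) (Real.exp_pos _).le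
    calc lam * ∫ r in s n, r ^ (q + 1) * Real.exp (-(g r))
        ≤ ∫ r in Ioc a b, r ^ q * (Real.exp (-(g r)) * G r) := step1
      _ = ∫ r in a..b, r ^ q * (Real.exp (-(g r)) * G r) :=
          (intervalIntegral.integral_of_le hab').symm
      _ = (∫ r in a..b, q * r ^ (q-1) * Real.exp (-(g r)))
          - (b ^ q * Real.exp (-(g b)) - a ^ q * Real.exp (-(g a))) := hGterm
      _ ≤ q * I₂ + a ^ q * Real.exp (-A) := by
          have := hIocIoi
          linarith
  -- limits
  have hmono : Monotone s := by
    intro n m hnm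
    apply Ioc_subset_Ioc
    · apply one_div_le_one_div_of_le (by positivity)
      have : (n:ℝ) ≤ (m:ℝ) := Nat.cast_le.2 hnm
      linarith
    · have : (n:ℝ) ≤ (m:ℝ) := Nat.cast_le.2 hnm
      linarith
  have hunion : (⋃ n, s n) = Ioi (0:ℝ) := by
    ext x
    simp only [mem_iUnion, hs, mem_Ioc, mem_Ioi]
    constructor
    · rintro ⟨n, h1, h2⟩
      exact lt_trans (hapos n) h1
    · intro hx
      obtain ⟨n, hn⟩ := exists_nat_gt (max (1/x) x)
      have h1x : 1/x < (n:ℝ) := lt_of_le_of_lt (le_max_left _ _) hn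
      have hxn : x < (n:ℝ) := lt_of_le_of_lt (le_max_right _ _) hn
      refine ⟨n, ?_, by linarith⟩
      have h2 : 1/x < (n:ℝ)+1 := by linarith
      rw [div_lt_iff₀ hx] at h2
      rw [div_lt_iff₀ (by positivity)]
      linarith
  have hF : Filter.Tendsto (fun n => ∫ r in s n, r ^ (q + 1) * Real.exp (-(g r)))
      Filter.atTop (nhds I₁) := by
    rw [hI₁, ← hunion]
    exact tendsto_setIntegral_of_monotone (fun n => measurableSet_Ioc) hmono
      (by rw [hunion]; exact Int1)
  have hB : Filter.Tendsto (fun n : ℕ => q * I₂ + (1/((n:ℝ)+1)) ^ q * Real.exp (-A))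
      Filter.atTop (nhds (q * I₂ + 0 * Real.exp (-A))) := by
    refine Filter.Tendsto.add tendsto_const_nhds (Filter.Tendsto.mul ?_ tendsto_const_nhds)
    have h0 : Filter.Tendsto (fun n : ℕ => 1/((n:ℝ)+1)) Filter.atTop (nhds 0) :=
      tendsto_one_div_add_atTop_nhds_zero_nat
    refine squeeze_zero (fun n => Real.rpow_nonneg (hapos n).le q) (fun n => ?_) h0
    calc (1/((n:ℝ)+1)) ^ q ≤ (1/((n:ℝ)+1)) ^ (1:ℝ) := by
          apply Real.rpow_le_rpow_of_exponent_ge (hapos n) ?_ hq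
          have h0n : (0:ℝ) ≤ (n:ℝ) := Nat.cast_nonneg n
          rw [div_le_one (by linarith)]
          linarith
      _ = 1/((n:ℝ)+1) := Real.rpow_one _
  have hFmul : Filter.Tendsto (fun n => lam * ∫ r in s n, r ^ (q + 1) * Real.exp (-(g r)))
      Filter.atTop (nhds (lam * I₁)) := hF.const_mul lam
  have := le_of_tendsto_of_tendsto' hFmul hB key
  simpa using this



lemma polar {d : ℕ} (hd : 0 < d) (f : EuclideanSpace ℝ (Fin d) → ℝ≥0∞) (hf : Measurable f) :
    ∫⁻ y, f y = ∫⁻ θ : sphere (0 : EuclideanSpace ℝ (Fin d)) 1,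
      ∫⁻ r in Ioi (0:ℝ), ENNReal.ofReal (r ^ (d-1)) * f (r • (θ : EuclideanSpace ℝ (Fin d)))
      ∂volume ∂((volume : Measure (EuclideanSpace ℝ (Fin d))).toSphere) := by
  have hdim : Module.finrank ℝ (EuclideanSpace ℝ (Fin d)) = d := finrank_euclideanSpace_fin
  haveI : Nontrivial (EuclideanSpace ℝ (Fin d)) :=
    Module.nontrivial_of_finrank_pos (R := ℝ) (by rw [hdim]; exact hd)
  set μ : Measure (EuclideanSpace ℝ (Fin d)) := volume with hμ
  have hsymm : Measurable fun z : sphere (0:EuclideanSpace ℝ (Fin d)) 1 × Ioi (0:ℝ) =>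
      (z.2 : ℝ) • (z.1 : EuclideanSpace ℝ (Fin d)) :=
    ((continuous_subtype_val.comp continuous_snd).smul
      (continuous_subtype_val.comp continuous_fst)).measurable
  have hmeas : Measurable fun z : sphere (0:EuclideanSpace ℝ (Fin d)) 1 × Ioi (0:ℝ) =>
      f ((z.2 : ℝ) • (z.1 : EuclideanSpace ℝ (Fin d))) := hf.comp hsymm
  have h1 : ∫⁻ y, f y ∂μ = ∫⁻ y in ({0}ᶜ : Set (EuclideanSpace ℝ (Fin d))), f y ∂μ := by
    rw [MeasureTheory.restrict_compl_singleton]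
  have h2 : ∫⁻ y in ({0}ᶜ : Set (EuclideanSpace ℝ (Fin d))), f y ∂μ =
      ∫⁻ x : ({0}ᶜ : Set (EuclideanSpace ℝ (Fin d))), f x ∂(μ.comap (↑)) :=
    (lintegral_subtype_comap (measurableSet_singleton _).compl _).symm
  have h3 : ∫⁻ x : ({0}ᶜ : Set (EuclideanSpace ℝ (Fin d))), f x ∂(μ.comap (↑)) =
      ∫⁻ z : sphere (0:EuclideanSpace ℝ (Fin d)) 1 × Ioi (0:ℝ),
        f ((z.2 : ℝ) • (z.1 : EuclideanSpace ℝ (Fin d)))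
        ∂(μ.toSphere.prod (.volumeIoiPow (Module.finrank ℝ (EuclideanSpace ℝ (Fin d)) - 1))) := by
    rw [← (μ.measurePreserving_homeomorphUnitSphereProd).lintegral_comp hmeas]
    refine lintegral_congr fun x => ?_
    congr 1
    have : ((homeomorphUnitSphereProd (EuclideanSpace ℝ (Fin d))).symm
        ((homeomorphUnitSphereProd (EuclideanSpace ℝ (Fin d))) x) : EuclideanSpace ℝ (Fin d))
        = (x : EuclideanSpace ℝ (Fin d)) := by rw [Homeomorph.symm_apply_apply]
    rw [← this, homeomorphUnitSphereProd_symm_apply_coe]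
  have h4 : ∫⁻ z : sphere (0:EuclideanSpace ℝ (Fin d)) 1 × Ioi (0:ℝ),
        f ((z.2 : ℝ) • (z.1 : EuclideanSpace ℝ (Fin d)))
        ∂(μ.toSphere.prod (.volumeIoiPow (Module.finrank ℝ (EuclideanSpace ℝ (Fin d)) - 1))) =
      ∫⁻ θ : sphere (0:EuclideanSpace ℝ (Fin d)) 1,
        ∫⁻ r : Ioi (0:ℝ), f ((r : ℝ) • (θ : EuclideanSpace ℝ (Fin d)))
        ∂(Measure.volumeIoiPow (Module.finrank ℝ (EuclideanSpace ℝ (Fin d)) - 1)) ∂μ.toSphere :=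
    lintegral_prod _ hmeas.aemeasurable
  have h5 : ∀ θ : sphere (0:EuclideanSpace ℝ (Fin d)) 1,
      ∫⁻ r : Ioi (0:ℝ), f ((r : ℝ) • (θ : EuclideanSpace ℝ (Fin d)))
        ∂(Measure.volumeIoiPow (Module.finrank ℝ (EuclideanSpace ℝ (Fin d)) - 1)) =
      ∫⁻ r in Ioi (0:ℝ), ENNReal.ofReal (r ^ (d-1)) *
        f (r • (θ : EuclideanSpace ℝ (Fin d))) ∂volume := by
    intro θ
    rw [Measure.volumeIoiPow,
      lintegral_withDensity_eq_lintegral_mul _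
        (by fun_prop :
          Measurable fun r : Ioi (0:ℝ) =>
            ENNReal.ofReal ((r:ℝ) ^ (Module.finrank ℝ (EuclideanSpace ℝ (Fin d)) - 1)))
        (by exact hf.comp ((continuous_subtype_val.smul continuous_const).measurable) :
          Measurable fun r : Ioi (0:ℝ) => f ((r:ℝ) • (θ : EuclideanSpace ℝ (Fin d))))]
    simp_rw [Pi.mul_apply, hdim]
    exact lintegral_subtype_comap measurableSet_Ioi
      (fun r : ℝ => ENNReal.ofReal (r ^ (d-1)) * f (r • (θ : EuclideanSpace ℝ (Fin d))))
  rw [h1, h2, h3, h4]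
  exact lintegral_congr h5

/-- for `ψ : ℝ^d → ℝ` smooth and `λ`-strongly convex with minimizer `x*`
and `∫ e^{-ψ} < ∞`, the moments `V(p) = ∫ |x - x*|^p e^{-ψ}` satisfy, for `p ≥ 2`,
`V(p) ≤ ((d + p - 2)/λ) V(p - 2)`. -/
theorem stmt16 {d : ℕ} (ψ : EuclideanSpace ℝ (Fin d) → ℝ) (lam : ℝ) (hlam : 0 < lam)
    (hsm : ContDiff ℝ (⊤ : ℕ∞) ψ)
    (hstrong : ∀ x y : EuclideanSpace ℝ (Fin d),
      ψ x + (inner ℝ (gradient ψ x) (y - x) : ℝ) + lam / 2 * ‖y - x‖ ^ 2 ≤ ψ y)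
    (xstar : EuclideanSpace ℝ (Fin d)) (hmin : IsMinOn ψ Set.univ xstar)
    (hint : Integrable fun x => Real.exp (-ψ x))
    (p : ℝ) (hp : 2 ≤ p) :
    (∫ x, ‖x - xstar‖ ^ p * Real.exp (-ψ x)) ≤
      ((d + p - 2) / lam) * ∫ x, ‖x - xstar‖ ^ (p - 2) * Real.exp (-ψ x) := by
  have hp0 : (0:ℝ) < p := by linarith
  have hp2 : (0:ℝ) ≤ p - 2 := by linarith
  rcases Nat.eq_zero_or_pos d with hd | hd
  · subst hd
    have hLHS : (∫ x, ‖x - xstar‖ ^ p * Real.exp (-ψ x)) = 0 := by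
      have : (fun x : EuclideanSpace ℝ (Fin 0) => ‖x - xstar‖ ^ p * Real.exp (-ψ x)) =
          fun _ => 0 := by
        funext x
        have hx : x = xstar := Subsingleton.elim x xstar
        rw [hx, sub_self, norm_zero, Real.zero_rpow (ne_of_gt hp0), zero_mul]
      rw [this, integral_zero]
    rw [hLHS]
    refine mul_nonneg (div_nonneg (by push_cast; linarith) hlam.le) (integral_nonneg fun x => ?_)
    exact mul_nonneg (Real.rpow_nonneg (norm_nonneg _) _) (Real.exp_pos _).le
  -- main case : 0 < d
  have hdiff : Differentiable ℝ ψ := hsm.differentiable (by simp)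
  have hlink : ∀ (x v : EuclideanSpace ℝ (Fin d)),
      (inner ℝ (gradient ψ x) v : ℝ) = fderiv ℝ ψ x v := by
    intro x v
    rw [gradient, ← InnerProductSpace.toDual_apply_apply, LinearIsometryEquiv.apply_symm_apply]
  have hloc : IsLocalMin ψ xstar := hmin.isLocalMin Filter.univ_mem
  have hfd0 : fderiv ℝ ψ xstar = 0 := hloc.fderiv_eq_zero
  have hkey : ∀ x : EuclideanSpace ℝ (Fin d),
      lam * ‖x - xstar‖ ^ 2 ≤ fderiv ℝ ψ x (x - xstar) := by
    intro x
    have h1 := hstrong x xstar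
    have h2 := hstrong xstar x
    rw [hlink] at h1 h2
    rw [hfd0] at h2
    simp only [ContinuousLinearMap.zero_apply] at h2
    have h3 : fderiv ℝ ψ x (xstar - x) = -(fderiv ℝ ψ x (x - xstar)) := by
      rw [show xstar - x = -(x - xstar) by abel, map_neg]
    rw [h3] at h1
    have h4 : ‖xstar - x‖ = ‖x - xstar‖ := norm_sub_rev _ _
    rw [h4] at h1
    linarith
  have hgrow0 : ∀ y : EuclideanSpace ℝ (Fin d),
      ψ xstar + lam / 2 * ‖y‖ ^ 2 ≤ ψ (xstar + y) := by
    intro y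
    have h1 := hstrong xstar (xstar + y)
    rw [hlink, hfd0] at h1
    simp only [ContinuousLinearMap.zero_apply, add_sub_cancel_left] at h1
    linarith

  -- abbreviations
  set q : ℝ := (d:ℝ) + p - 2 with hqdef
  have hd1 : (1:ℝ) ≤ (d:ℝ) := by exact_mod_cast hd
  have hq1 : 1 ≤ q := by rw [hqdef]; linarith
  have hC0 : (0:ℝ) ≤ q / lam := div_nonneg (by linarith) hlam.le
  -- translation
  have htrans : ∀ s : ℝ, (∫ x, ‖x - xstar‖ ^ s * Real.exp (-ψ x)) =
      ∫ y, ‖y‖ ^ s * Real.exp (-ψ (xstar + y)) := by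
    intro s
    rw [← integral_add_left_eq_self (fun x => ‖x - xstar‖ ^ s * Real.exp (-ψ x)) xstar]
    simp [add_sub_cancel_left]
  have hχc : Continuous fun y : EuclideanSpace ℝ (Fin d) => ψ (xstar + y) :=
    hsm.continuous.comp (continuous_const.add continuous_id)
  have cont1 : Continuous fun y : EuclideanSpace ℝ (Fin d) =>
      ‖y‖ ^ p * Real.exp (-ψ (xstar + y)) :=
    ((Real.continuous_rpow_const hp0.le).comp continuous_norm).mul (hχc.neg.rexp)
  have cont2 : Continuous fun y : EuclideanSpace ℝ (Fin d) =>
      ‖y‖ ^ (p-2) * Real.exp (-ψ (xstar + y)) :=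
    ((Real.continuous_rpow_const hp2).comp continuous_norm).mul (hχc.neg.rexp)
  set f₁ : EuclideanSpace ℝ (Fin d) → ℝ≥0∞ :=
    fun y => ENNReal.ofReal (‖y‖ ^ p * Real.exp (-ψ (xstar + y))) with hf₁def
  set f₂ : EuclideanSpace ℝ (Fin d) → ℝ≥0∞ :=
    fun y => ENNReal.ofReal (‖y‖ ^ (p-2) * Real.exp (-ψ (xstar + y))) with hf₂def
  have hmf₁ : Measurable f₁ := ENNReal.measurable_ofReal.comp cont1.measurable
  have hmf₂ : Measurable f₂ := ENNReal.measurable_ofReal.comp cont2.measurable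
  set L₁ := ∫⁻ y, f₁ y with hL₁def
  set L₂ := ∫⁻ y, f₂ y with hL₂def
  have heq1 : (∫ y, ‖y‖ ^ p * Real.exp (-ψ (xstar + y))) = L₁.toReal := by
    rw [hL₁def, integral_eq_lintegral_of_nonneg_ae (ae_of_all _ fun y =>
      mul_nonneg (Real.rpow_nonneg (norm_nonneg _) _) (Real.exp_pos _).le)
      cont1.aestronglyMeasurable]
  have heq2 : (∫ y, ‖y‖ ^ (p-2) * Real.exp (-ψ (xstar + y))) = L₂.toReal := by
    rw [hL₂def, integral_eq_lintegral_of_nonneg_ae (ae_of_all _ fun y =>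
      mul_nonneg (Real.rpow_nonneg (norm_nonneg _) _) (Real.exp_pos _).le)
      cont2.aestronglyMeasurable]
  -- fiber data
  set M : ℝ := ∫ r in Ioi (0:ℝ),
      Real.exp (-(ψ xstar)) * (r ^ (q-1) * Real.exp (-(lam/2) * r ^ 2)) with hMdef
  have hMint : IntegrableOn
      (fun r : ℝ => Real.exp (-(ψ xstar)) * (r ^ (q-1) * Real.exp (-(lam/2) * r ^ 2)))
      (Ioi (0:ℝ)) :=
    (integrableOn_rpow_mul_exp_neg_mul_sq (by linarith) (by linarith : (-1:ℝ) < q - 1)).const_mul _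
  have hfiber : ∀ θ : sphere (0 : EuclideanSpace ℝ (Fin d)) 1,
      (∫⁻ r in Ioi (0:ℝ), ENNReal.ofReal (r ^ (d-1)) *
          f₁ (r • (θ : EuclideanSpace ℝ (Fin d))) ∂volume) ≤
        ENNReal.ofReal (q / lam) * ∫⁻ r in Ioi (0:ℝ), ENNReal.ofReal (r ^ (d-1)) *
          f₂ (r • (θ : EuclideanSpace ℝ (Fin d))) ∂volume ∧
      (∫⁻ r in Ioi (0:ℝ), ENNReal.ofReal (r ^ (d-1)) *
          f₂ (r • (θ : EuclideanSpace ℝ (Fin d))) ∂volume) ≤ ENNReal.ofReal M := by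
    intro θ
    have hθ1 : ‖(θ : EuclideanSpace ℝ (Fin d))‖ = 1 := mem_sphere_zero_iff_norm.1 θ.2
    set g : ℝ → ℝ := fun r => ψ (xstar + r • (θ : EuclideanSpace ℝ (Fin d))) with hgdef
    set G : ℝ → ℝ :=
      fun r => fderiv ℝ ψ (xstar + r • (θ : EuclideanSpace ℝ (Fin d)))
        (θ : EuclideanSpace ℝ (Fin d)) with hGdef
    have hcurve : ∀ r : ℝ, HasDerivAt
        (fun r : ℝ => xstar + r • (θ : EuclideanSpace ℝ (Fin d)))
        (θ : EuclideanSpace ℝ (Fin d)) r := by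
      intro r
      have h := (hasDerivAt_id r).smul_const (θ : EuclideanSpace ℝ (Fin d))
      rw [one_smul] at h
      exact h.const_add xstar
    have hder : ∀ r : ℝ, HasDerivAt g (G r) r := fun r =>
      ((hdiff _).hasFDerivAt).comp_hasDerivAt r (hcurve r)
    have hGc : Continuous G :=
      ((hsm.continuous_fderiv (by simp)).comp
        (continuous_const.add (continuous_id.smul continuous_const))).clm_apply
        continuous_const
    have hgc : Continuous g := hχc.comp (continuous_id.smul continuous_const)
    have hnorm : ∀ r : ℝ, 0 ≤ r → ‖r • (θ : EuclideanSpace ℝ (Fin d))‖ = r := by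
      intro r hr
      rw [norm_smul, hθ1, mul_one, Real.norm_eq_abs, abs_of_nonneg hr]
    have hlow : ∀ r : ℝ, 0 < r → lam * r ≤ G r := by
      intro r hr
      have h := hkey (xstar + r • (θ : EuclideanSpace ℝ (Fin d)))
      rw [add_sub_cancel_left, hnorm r hr.le, ContinuousLinearMap.map_smul, smul_eq_mul] at h
      exact le_of_mul_le_mul_left (by nlinarith) hr
    have hgrow : ∀ r : ℝ, 0 ≤ r → ψ xstar + lam / 2 * r ^ 2 ≤ g r := by
      intro r hr
      have h := hgrow0 (r • (θ : EuclideanSpace ℝ (Fin d)))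
      rw [hnorm r hr] at h
      exact h
    have hfib := fiber_ineq hder hGc hlam hlow hgrow hq1
    have Int1θ : IntegrableOn (fun r : ℝ => r ^ (q+1) * Real.exp (-(g r))) (Ioi 0) :=
      integ_aux hgc hlam hgrow (by linarith)
    have Int2θ : IntegrableOn (fun r : ℝ => r ^ (q-1) * Real.exp (-(g r))) (Ioi 0) :=
      integ_aux hgc hlam hgrow (by linarith)
    have hdrpow : ∀ r : ℝ, 0 < r → (r ^ (d-1:ℕ) : ℝ) = r ^ ((d:ℝ) - 1) := by
      intro r hr
      rw [← Real.rpow_natCast r (d-1), Nat.cast_sub hd, Nat.cast_one]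
    have hA₁ : (∫⁻ r in Ioi (0:ℝ), ENNReal.ofReal (r ^ (d-1)) *
        f₁ (r • (θ : EuclideanSpace ℝ (Fin d))) ∂volume) =
        ENNReal.ofReal (∫ r in Ioi (0:ℝ), r ^ (q+1) * Real.exp (-(g r))) := by
      have hpt : ∀ᵐ r ∂(volume : Measure ℝ), r ∈ Ioi (0:ℝ) →
          ENNReal.ofReal (r ^ (d-1)) * f₁ (r • (θ : EuclideanSpace ℝ (Fin d))) =
          ENNReal.ofReal (r ^ (q+1) * Real.exp (-(g r))) := by
        apply ae_of_all
        intro r hr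
        show ENNReal.ofReal (r ^ (d-1)) *
          ENNReal.ofReal (‖r • (θ : EuclideanSpace ℝ (Fin d))‖ ^ p *
            Real.exp (-ψ (xstar + r • (θ : EuclideanSpace ℝ (Fin d))))) = _
        rw [← ENNReal.ofReal_mul (pow_nonneg (le_of_lt hr) _)]
        congr 1
        rw [hnorm r (le_of_lt hr), hdrpow r hr, ← mul_assoc, ← Real.rpow_add hr]
        have he : (d:ℝ) - 1 + p = q + 1 := by rw [hqdef]; ring
        rw [he, hgdef]
      rw [setLIntegral_congr_fun_ae measurableSet_Ioi hpt,
        ← ofReal_integral_eq_lintegral_ofReal Int1θ ?_]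
      filter_upwards [ae_restrict_mem measurableSet_Ioi] with r hr
      exact mul_nonneg (Real.rpow_nonneg (le_of_lt hr) _) (Real.exp_pos _).le
    have hA₂ : (∫⁻ r in Ioi (0:ℝ), ENNReal.ofReal (r ^ (d-1)) *
        f₂ (r • (θ : EuclideanSpace ℝ (Fin d))) ∂volume) =
        ENNReal.ofReal (∫ r in Ioi (0:ℝ), r ^ (q-1) * Real.exp (-(g r))) := by
      have hpt : ∀ᵐ r ∂(volume : Measure ℝ), r ∈ Ioi (0:ℝ) →
          ENNReal.ofReal (r ^ (d-1)) * f₂ (r • (θ : EuclideanSpace ℝ (Fin d))) =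
          ENNReal.ofReal (r ^ (q-1) * Real.exp (-(g r))) := by
        apply ae_of_all
        intro r hr
        show ENNReal.ofReal (r ^ (d-1)) *
          ENNReal.ofReal (‖r • (θ : EuclideanSpace ℝ (Fin d))‖ ^ (p-2) *
            Real.exp (-ψ (xstar + r • (θ : EuclideanSpace ℝ (Fin d))))) = _
        rw [← ENNReal.ofReal_mul (pow_nonneg (le_of_lt hr) _)]
        congr 1
        rw [hnorm r (le_of_lt hr), hdrpow r hr, ← mul_assoc, ← Real.rpow_add hr]
        have he : (d:ℝ) - 1 + (p - 2) = q - 1 := by rw [hqdef]; ring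
        rw [he, hgdef]
      rw [setLIntegral_congr_fun_ae measurableSet_Ioi hpt,
        ← ofReal_integral_eq_lintegral_ofReal Int2θ ?_]
      filter_upwards [ae_restrict_mem measurableSet_Ioi] with r hr
      exact mul_nonneg (Real.rpow_nonneg (le_of_lt hr) _) (Real.exp_pos _).le
    constructor
    · rw [hA₁, hA₂, ← ENNReal.ofReal_mul hC0]
      apply ENNReal.ofReal_le_ofReal
      rw [div_mul_eq_mul_div, le_div_iff₀ hlam]
      have hnn : 0 ≤ ∫ r in Ioi (0:ℝ), r ^ (q+1) * Real.exp (-(g r)) := by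
        apply setIntegral_nonneg measurableSet_Ioi
        intro r hr
        exact mul_nonneg (Real.rpow_nonneg (le_of_lt hr) _) (Real.exp_pos _).le
      nlinarith [hfib]
    · rw [hA₂]
      apply ENNReal.ofReal_le_ofReal
      rw [hMdef]
      apply setIntegral_mono_on Int2θ hMint measurableSet_Ioi
      intro r hr
      have h1 : Real.exp (-(g r)) ≤ Real.exp (-(ψ xstar)) * Real.exp (-(lam/2) * r ^ 2) := by
        rw [← Real.exp_add]
        apply Real.exp_le_exp.2
        have := hgrow r (le_of_lt hr)
        linarith
      have h2 : (0:ℝ) ≤ r ^ (q-1) := Real.rpow_nonneg (le_of_lt hr) _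
      calc r ^ (q-1) * Real.exp (-(g r))
          ≤ r ^ (q-1) * (Real.exp (-(ψ xstar)) * Real.exp (-(lam/2) * r ^ 2)) :=
            mul_le_mul_of_nonneg_left h1 h2
        _ = Real.exp (-(ψ xstar)) * (r ^ (q-1) * Real.exp (-(lam/2) * r ^ 2)) := by ring
  -- assemble
  have hpolar1 := polar hd f₁ hmf₁
  have hpolar2 := polar hd f₂ hmf₂
  have hL₁le : L₁ ≤ ENNReal.ofReal (q / lam) * L₂ := by
    rw [hL₁def, hL₂def, hpolar1, hpolar2, ← lintegral_const_mul' _ _ ENNReal.ofReal_ne_top]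
    exact lintegral_mono fun θ => (hfiber θ).1
  have hL₂ne : L₂ ≠ ⊤ := by
    rw [hL₂def, hpolar2]
    refine ne_of_lt (lt_of_le_of_lt (lintegral_mono fun θ => (hfiber θ).2) ?_)
    rw [lintegral_const]
    exact ENNReal.mul_lt_top ENNReal.ofReal_lt_top (measure_lt_top _ _)
  rw [htrans p, htrans (p-2), heq1, heq2]
  calc L₁.toReal ≤ (ENNReal.ofReal (q / lam) * L₂).toReal :=
        ENNReal.toReal_mono (ENNReal.mul_ne_top ENNReal.ofReal_ne_top hL₂ne) hL₁le
    _ = (q / lam) * L₂.toReal := by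
        rw [ENNReal.toReal_mul, ENNReal.toReal_ofReal hC0]
end
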